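/- arXiv:0804.3943 — 2 statements merged into one kernel-verified Lean document; each statement's English description precedes it below -/
import Mathlib

section
/- Assume H is strictly convex (d_k > 0 for some finite k ≥ 2) and H'(μ¹) ≤ 1, and let μ* be the unique minimizer of x ↦ H(x) − x on [0,1]. For ε > 0 with μ¹ + ε ≤ 1 define f_ε(x) = 1 − 2H(μ¹ + ε) + H(x). Then there exists ε₀ > 0 such that for every ε ∈ (0, ε₀): f_ε has exactly one fixed point in [0, μ*), denoted μ¹(ε); moreover μ¹(ε) → μ¹ as ε → 0⁺. -/
open MeasureTheory ProbabilityTheory Filter Topology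

/-- The generating function `H(x) = ∑_{k≥1} d_k x^k` (we use `d : ℕ → ℝ` with `d 0 = 0`). -/
noncomputable def genFun (d : ℕ → ℝ) (x : ℝ) : ℝ := ∑' k, d k * x ^ k

/-- The derivative `H'(x) = ∑_{k≥1} k d_k x^(k-1)`. -/
noncomputable def genFunDeriv (d : ℕ → ℝ) (x : ℝ) : ℝ :=
  ∑' k : ℕ, ((k : ℝ) + 1) * d (k + 1) * x ^ k

/-!
With `G(x) = H(x) - x`, the fixed points of `f_ε` are the solutions of
`G(x) = 2H(μ¹ + ε) - 1`, a level that tends to `2H(μ¹) - 1 = G(μ¹)` from above as `ε → 0⁺`.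
`G` is convex with unique minimizer `μ*`, hence strictly decreasing on `[0, μ*]`, and the
tangent line of `H` at `μ¹`, of slope `H'(μ¹) ≤ 1`, gives `μ¹ ≤ μ*`. So for small `ε` the
level lies strictly between `G(μ¹)` and `G(0)`: the intermediate value theorem gives a
solution in `(0, μ¹)`, unique in `[0, μ*)` by monotonicity, and it tends to `μ¹` because
`G` is strictly monotone.
-/

open Set

theorem pow_add_mul_sub_le_pow {a x : ℝ} (ha : 0 < a) (hx : -a ≤ x) (n : ℕ) :
    a ^ (n + 1) + (n + 1) * a ^ n * (x - a) ≤ x ^ (n + 1) := by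
  have hpos : 0 < a ^ (n + 1) := pow_pos ha _
  have hxa : -1 ≤ x / a := by rwa [le_div_iff₀ ha, neg_one_mul]
  have h := mul_le_mul_of_nonneg_left (one_add_mul_sub_le_pow hxa (n + 1)) hpos.le
  rw [div_pow, mul_div_cancel₀ _ hpos.ne'] at h
  refine le_of_eq_of_le ?_ h
  push_cast
  field_simp
  ring

theorem ConvexOn.strictAntiOn_inter_Iic {𝕜 β : Type*} [Field 𝕜] [LinearOrder 𝕜]
    [IsStrictOrderedRing 𝕜] [AddCommMonoid β] [LinearOrder β] [IsOrderedCancelAddMonoid β]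
    [Module 𝕜 β] [PosSMulStrictMono 𝕜 β] {s : Set 𝕜} {f : 𝕜 → β} {m : 𝕜}
    (hf : ConvexOn 𝕜 s f) (hm : m ∈ s) (hmin : ∀ x ∈ s, x ≠ m → f m < f x) :
    StrictAntiOn f (s ∩ Iic m) := by
  rintro a ⟨has, -⟩ b ⟨hbs, hbm⟩ hab
  rcases hbm.eq_or_lt with rfl | hbm
  · exact hmin a has hab.ne
  · have hb : b ∈ openSegment 𝕜 a m := by rw [openSegment_eq_Ioo (hab.trans hbm)]; exact ⟨hab, hbm⟩
    exact hf.lt_left_of_right_lt has hm hb (hmin b hbs hbm.ne)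

theorem tendsto_of_strictAntiOn_of_tendsto_comp {α β ι : Type*} [LinearOrder α]
    [TopologicalSpace α] [OrderTopology α] [LinearOrder β] [TopologicalSpace β]
    [ClosedIciTopology β] {G : α → β} {a b : α} {l : Filter ι} {x : ι → α}
    (hG : StrictAntiOn G (Icc a b)) (hx : ∀ᶠ i in l, x i ∈ Icc a b)
    (hGx : Tendsto (G ∘ x) l (𝓝 (G b))) : Tendsto x l (𝓝 b) := by
  refine tendsto_order.2 ⟨fun c hcb => ?_, fun c hbc => hx.mono fun i hi => hi.2.trans_lt hbc⟩
  rcases lt_or_ge c a with hca | hac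
  · exact hx.mono fun i hi => hca.trans_le hi.1
  · have hc : c ∈ Icc a b := ⟨hac, hcb.le⟩
    have hGc : G b < G c := hG hc ⟨hac.trans hcb.le, le_rfl⟩ hcb
    filter_upwards [hx, hGx.eventually_lt_const hGc] with i hi hGi
    exact (hG.lt_iff_gt hi hc).1 hGi

theorem StrictAntiOn.exists_tendsto_of_tendsto_comp {α δ ι : Type*}
    [ConditionallyCompleteLinearOrder α] [DenselyOrdered α] [TopologicalSpace α]
    [OrderTopology α] [LinearOrder δ] [TopologicalSpace δ] [OrderClosedTopology δ]
    {G : α → δ} {c : ι → δ} {a b : α} {l : Filter ι} (hab : a ≤ b)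
    (hanti : StrictAntiOn G (Icc a b)) (hG : ContinuousOn G (Icc a b))
    (hc : ∀ᶠ i in l, c i ∈ Ioo (G b) (G a))
    (hlim : Tendsto c l (𝓝 (G b))) :
    ∃ g : ι → α, (∀ i, c i ∈ Ioo (G b) (G a) → g i ∈ Ioo a b ∧ G (g i) = c i) ∧
      Tendsto g l (𝓝 b) := by
  have hroot : ∀ i, c i ∈ Ioo (G b) (G a) → ∃ x ∈ Ioo a b, G x = c i := fun i hi =>
    intermediate_value_Ioo' hab hG hi
  choose! g hg using hroot
  refine ⟨g, hg, tendsto_of_strictAntiOn_of_tendsto_comp hanti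
    (hc.mono fun i hi => Ioo_subset_Icc_self (hg i hi).1) (hlim.congr' ?_)⟩
  filter_upwards [hc] with i hi
  exact (hg i hi).2.symm

section genFun

variable {d : ℕ → ℝ}

theorem summable_genFun_terms (hdnn : ∀ k, 0 ≤ d k) (hdsum : Summable d) {x : ℝ}
    (hx : x ∈ Icc 0 1) : Summable fun k => d k * x ^ k :=
  hdsum.of_nonneg_of_le (fun k => mul_nonneg (hdnn k) (pow_nonneg hx.1 k))
    fun k => mul_le_of_le_one_right (hdnn k) (pow_le_one₀ hx.1 hx.2)

theorem continuousOn_genFun (hdnn : ∀ k, 0 ≤ d k) (hdsum : Summable d) :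
    ContinuousOn (genFun d) (Icc 0 1) := by
  refine continuousOn_tsum (fun k => (continuous_const.mul (continuous_pow k)).continuousOn)
    hdsum fun k x hx => ?_
  rw [norm_mul, norm_pow, Real.norm_of_nonneg (hdnn k)]
  exact mul_le_of_le_one_right (hdnn k)
    (pow_le_one₀ (norm_nonneg x) (abs_le.2 ⟨by linarith [hx.1], hx.2⟩))

theorem genFun_strictMonoOn (hdnn : ∀ k, 0 ≤ d k) (hdsum : Summable d) {k : ℕ} (hk : k ≠ 0)
    (hdk : 0 < d k) : StrictMonoOn (genFun d) (Icc 0 1) := fun _ hx _ hy hxy =>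
  Summable.tsum_lt_tsum (i := k)
    (fun j => mul_le_mul_of_nonneg_left (pow_le_pow_left₀ hx.1 hxy.le j) (hdnn j))
    (mul_lt_mul_of_pos_left (pow_lt_pow_left₀ hxy hx.1 hk) hdk)
    (summable_genFun_terms hdnn hdsum hx) (summable_genFun_terms hdnn hdsum hy)

theorem convexOn_genFun (hdnn : ∀ k, 0 ≤ d k) (hdsum : Summable d) :
    ConvexOn ℝ (Icc 0 1) (genFun d) := by
  refine ⟨convex_Icc 0 1, fun x hx y hy a b ha hb hab => ?_⟩
  have hsx := summable_genFun_terms hdnn hdsum hx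
  have hsy := summable_genFun_terms hdnn hdsum hy
  have hs := summable_genFun_terms hdnn hdsum (convex_Icc 0 1 hx hy ha hb hab)
  simp only [smul_eq_mul, genFun]
  rw [← tsum_mul_left, ← tsum_mul_left, ← (hsx.mul_left a).tsum_add (hsy.mul_left b)]
  refine hs.tsum_le_tsum (fun k => ?_) ((hsx.mul_left a).add (hsy.mul_left b))
  have hk := (convexOn_pow k).2 (mem_Ici.2 hx.1) (mem_Ici.2 hy.1) ha hb hab
  simp only [smul_eq_mul] at hk
  nlinarith [mul_le_mul_of_nonneg_left hk (hdnn k)]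

theorem summable_genFunDeriv_terms (hdnn : ∀ k, 0 ≤ d k) (hdsum : Summable d) {x : ℝ}
    (hx0 : 0 ≤ x) (hx1 : x < 1) :
    Summable fun k : ℕ => ((k : ℝ) + 1) * d (k + 1) * x ^ k := by
  have hgeom : Summable fun k : ℕ => ((k : ℝ) + 1) * x ^ k := by
    have h := summable_pow_mul_geometric_of_norm_lt_one 1
      (by rwa [Real.norm_of_nonneg hx0] : ‖x‖ < 1)
    simpa [add_mul] using h.add (summable_geometric_of_lt_one hx0 hx1)
  refine (hgeom.mul_left (∑' j, d j)).of_nonneg_of_le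
    (fun k => by have := hdnn (k + 1); positivity) fun k => ?_
  have hdk : d (k + 1) ≤ ∑' j, d j := hdsum.le_tsum (k + 1) fun j _ => hdnn j
  calc ((k : ℝ) + 1) * d (k + 1) * x ^ k = d (k + 1) * (((k : ℝ) + 1) * x ^ k) := by ring
    _ ≤ (∑' j, d j) * (((k : ℝ) + 1) * x ^ k) :=
      mul_le_mul_of_nonneg_right hdk (by positivity)

theorem genFun_tangent_le (hdnn : ∀ k, 0 ≤ d k) (hdsum : Summable d) {a x : ℝ}
    (ha0 : 0 < a) (ha1 : a < 1) (hx : x ∈ Icc 0 1) :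
    genFun d a + genFunDeriv d a * (x - a) ≤ genFun d x := by
  have hsa := summable_genFun_terms hdnn hdsum ⟨ha0.le, ha1.le⟩
  have hsx := summable_genFun_terms hdnn hdsum hx
  have hsd := (summable_genFunDeriv_terms hdnn hdsum ha0.le ha1).mul_right (x - a)
  have hsa' := (summable_nat_add_iff 1).2 hsa
  rw [genFun, genFun, hsa.tsum_eq_zero_add, hsx.tsum_eq_zero_add, genFunDeriv,
    ← tsum_mul_right, add_assoc, ← hsa'.tsum_add hsd]
  refine add_le_add (by simp) ((hsa'.add hsd).tsum_le_tsum (fun k => ?_)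
    ((summable_nat_add_iff 1).2 hsx))
  have h := mul_le_mul_of_nonneg_left
    (pow_add_mul_sub_le_pow (x := x) ha0 (by linarith [hx.1]) k) (hdnn (k + 1))
  linarith

theorem le_of_genFunDeriv_le_one (hdnn : ∀ k, 0 ≤ d k) (hdsum : Summable d) {a m : ℝ}
    (ha : a ∈ Ioo 0 1) (hstable : genFunDeriv d a ≤ 1) (hm : m ∈ Icc 0 1)
    (hmin : ∀ x ∈ Icc 0 1, x ≠ m → genFun d m - m < genFun d x - x) : a ≤ m := by
  by_contra! hma
  have hlt := hmin a (Ioo_subset_Icc_self ha) hma.ne'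
  have htan := genFun_tangent_le hdnn hdsum ha.1 ha.2 hm
  nlinarith [mul_le_mul_of_nonneg_right hstable (sub_nonneg.2 hma.le)]

theorem strictAntiOn_genFun_sub_id (hdnn : ∀ k, 0 ≤ d k) (hdsum : Summable d) {m : ℝ}
    (hm : m ∈ Icc 0 1) (hmin : ∀ x ∈ Icc 0 1, x ≠ m → genFun d m - m < genFun d x - x) :
    StrictAntiOn (fun x => genFun d x - x) (Icc 0 m) :=
  ((convexOn_genFun hdnn hdsum).sub (concaveOn_id (convex_Icc 0 1))).strictAntiOn_inter_Iic
    hm hmin |>.mono fun _ hx => ⟨⟨hx.1, hx.2.trans hm.2⟩, hx.2⟩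

noncomputable def perturbedLevel (d : ℕ → ℝ) (μ1 ε : ℝ) : ℝ := 2 * genFun d (μ1 + ε) - 1

theorem perturbed_eq_self_iff {μ1 ε y : ℝ} :
    1 - 2 * genFun d (μ1 + ε) + genFun d y = y ↔ genFun d y - y = perturbedLevel d μ1 ε := by
  unfold perturbedLevel
  constructor <;> intro h <;> linarith

theorem tendsto_perturbedLevel (hdnn : ∀ k, 0 ≤ d k) (hdsum : Summable d) {μ1 : ℝ}
    (hμ1 : μ1 ∈ Ioo 0 1) (hroot : genFun d μ1 + μ1 = 1) :
    Tendsto (perturbedLevel d μ1) (𝓝 0) (𝓝 (genFun d μ1 - μ1)) := by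
  have hH : ContinuousAt (genFun d) μ1 :=
    (continuousOn_genFun hdnn hdsum).continuousAt (Icc_mem_nhds hμ1.1 hμ1.2)
  have hshift : Tendsto (μ1 + ·) (𝓝 0) (𝓝 μ1) :=
    (continuous_const_add μ1).tendsto' 0 μ1 (add_zero μ1)
  rw [show genFun d μ1 - μ1 = 2 * genFun d μ1 - 1 by linarith]
  exact ((hH.tendsto.comp hshift).const_mul 2).sub_const 1

theorem eventually_perturbedLevel_mem (hdnn : ∀ k, 0 ≤ d k) (hdsum : Summable d) {k : ℕ}
    (hk : k ≠ 0) (hdk : 0 < d k) {μ1 : ℝ} (hμ1 : μ1 ∈ Ioo 0 1)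
    (hroot : genFun d μ1 + μ1 = 1) {c : ℝ} (hc : genFun d μ1 - μ1 < c) :
    ∀ᶠ ε in 𝓝[>] 0, μ1 + ε ≤ 1 ∧ perturbedLevel d μ1 ε ∈ Ioo (genFun d μ1 - μ1) c := by
  filter_upwards [Ioo_mem_nhdsGT (sub_pos.2 hμ1.2), nhdsWithin_le_nhds
    ((tendsto_perturbedLevel hdnn hdsum hμ1 hroot).eventually_lt_const hc)] with ε hε hlt
  have hε1 : μ1 + ε ≤ 1 := by linarith [hε.2]
  have hmono := genFun_strictMonoOn hdnn hdsum hk hdk (Ioo_subset_Icc_self hμ1)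
    ⟨by linarith [hμ1.1, hε.1], hε1⟩ (lt_add_of_pos_right μ1 hε.1)
  refine ⟨hε1, ?_, hlt⟩
  unfold perturbedLevel
  linarith

end genFun

theorem perturbed_fixed_point_general (d : ℕ → ℝ) (hdnn : ∀ k, 0 ≤ d k)
    (hdsum : Summable d)
    (hconv : ∃ k : ℕ, 2 ≤ k ∧ 0 < d k)
    (μ1 : ℝ) (hμ1 : μ1 ∈ Set.Ioo (0 : ℝ) 1) (hroot : genFun d μ1 + μ1 = 1)
    (hstable : genFunDeriv d μ1 ≤ 1)
    (μs : ℝ) (hμs : μs ∈ Set.Icc (0 : ℝ) 1)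
    (hmin : ∀ x ∈ Set.Icc (0 : ℝ) 1, x ≠ μs → genFun d μs - μs < genFun d x - x) :
    ∃ ε₀ > (0 : ℝ), ∃ g : ℝ → ℝ,
      (∀ ε : ℝ, 0 < ε → ε < ε₀ →
        μ1 + ε ≤ 1 ∧ g ε ∈ Set.Ico (0 : ℝ) μs ∧
        1 - 2 * genFun d (μ1 + ε) + genFun d (g ε) = g ε ∧
        (∀ y ∈ Set.Ico (0 : ℝ) μs, 1 - 2 * genFun d (μ1 + ε) + genFun d y = y → y = g ε)) ∧
      Tendsto g (nhdsWithin 0 (Set.Ioi 0)) (nhds μ1) := by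
  obtain ⟨k, hk, hdk⟩ := hconv
  have hμ1μs : μ1 ≤ μs := le_of_genFunDeriv_le_one hdnn hdsum hμ1 hstable hμs hmin
  have hanti := strictAntiOn_genFun_sub_id hdnn hdsum hμs hmin
  have hev := eventually_perturbedLevel_mem hdnn hdsum (by omega) hdk hμ1 hroot
    (hanti ⟨le_rfl, hμs.1⟩ ⟨hμ1.1.le, hμ1μs⟩ hμ1.1)
  obtain ⟨ε₀, hε₀, hsmall⟩ := mem_nhdsGT_iff_exists_Ioo_subset.1 hev
  have hcont : ContinuousOn (fun x => genFun d x - x) (Icc 0 μ1) :=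
    ((continuousOn_genFun hdnn hdsum).mono (Icc_subset_Icc_right hμ1.2.le)).sub continuousOn_id
  obtain ⟨g, hg, hlim⟩ := (hanti.mono (Icc_subset_Icc_right hμ1μs)).exists_tendsto_of_tendsto_comp
    hμ1.1.le hcont (hev.mono fun _ h => h.2)
    ((tendsto_perturbedLevel hdnn hdsum hμ1 hroot).mono_left nhdsWithin_le_nhds)
  refine ⟨ε₀, hε₀, g, fun ε hε hεε₀ => ?_, hlim⟩
  obtain ⟨hε1, hlevel⟩ := hsmall ⟨hε, hεε₀⟩
  obtain ⟨⟨hg0, hgμ1⟩, hGg⟩ := hg ε hlevel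
  have hgμs : g ε < μs := hgμ1.trans_le hμ1μs
  exact ⟨hε1, ⟨hg0.le, hgμs⟩, perturbed_eq_self_iff.2 hGg, fun y hy hfix =>
    hanti.injOn ⟨hy.1, hy.2.le⟩ ⟨hg0.le, hgμs.le⟩ ((perturbed_eq_self_iff.1 hfix).trans hGg.symm)⟩

/-- in the stable case `H'(μ¹) ≤ 1`, with `μ*` the unique minimizer of
`x ↦ H(x) - x` on `[0,1]`, there is `ε₀ > 0` such that for all `ε ∈ (0, ε₀)` the map
`f_ε(x) = 1 - 2H(μ¹ + ε) + H(x)` has exactly one fixed point `μ¹(ε)` in `[0, μ*)`, and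
`μ¹(ε) → μ¹` as `ε → 0⁺`. -/
theorem perturbed_fixed_point (d : ℕ → ℝ) (hd0 : d 0 = 0) (hdnn : ∀ k, 0 ≤ d k)
    (hdsum : Summable d) (hdle : ∑' k, d k ≤ 1)
    (hconv : ∃ k : ℕ, 2 ≤ k ∧ 0 < d k)
    (μ1 : ℝ) (hμ1 : μ1 ∈ Set.Ioo (0 : ℝ) 1) (hroot : genFun d μ1 + μ1 = 1)
    (hstable : genFunDeriv d μ1 ≤ 1)
    (μs : ℝ) (hμs : μs ∈ Set.Icc (0 : ℝ) 1)
    (hmin : ∀ x ∈ Set.Icc (0 : ℝ) 1, x ≠ μs → genFun d μs - μs < genFun d x - x) :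
    ∃ ε₀ > (0 : ℝ), ∃ g : ℝ → ℝ,
      (∀ ε : ℝ, 0 < ε → ε < ε₀ →
        μ1 + ε ≤ 1 ∧ g ε ∈ Set.Ico (0 : ℝ) μs ∧
        1 - 2 * genFun d (μ1 + ε) + genFun d (g ε) = g ε ∧
        (∀ y ∈ Set.Ico (0 : ℝ) μs, 1 - 2 * genFun d (μ1 + ε) + genFun d y = y → y = g ε)) ∧
      Tendsto g (nhdsWithin 0 (Set.Ioi 0)) (nhds μ1) :=
  perturbed_fixed_point_general d hdnn hdsum hconv μ1 hμ1 hroot hstable μs hμs hmin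
end

section
/- Assume H is strictly convex (d_k > 0 for some finite k ≥ 2), and let (μ₊, μ₋) be a two-cycle of the map f(t) = 1 − H(t), i.e. μ₊, μ₋ ∈ (0,1) with μ₋ = 1 − H(μ₊) and μ₊ = 1 − H(μ₋). Suppose H'(μ₊)·H'(μ₋) ≤ 1. Then for every t ∈ [0, μ₊] such that 1 − 2H(μ₊) + H(t) ∈ [0,1] and H(1 − 2H(μ₊) + H(t)) = 1 − 2μ₊ + t, one has t = μ₊; that is, any root of the second-moment equation for the iterated RDE other than μ₊ must be strictly greater than μ₊. -/
open MeasureTheory ProbabilityTheory Filter Topology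

lemma aux_pow_le {a b : ℝ} (ha : 0 ≤ a) (hab : a ≤ b) :
    ∀ n : ℕ, b ^ (n + 1) - a ^ (n + 1) ≤ ((n : ℝ) + 1) * b ^ n * (b - a) := by
  intro n
  induction n with
  | zero => simp
  | succ n ih =>
    have hb0 : 0 ≤ b := ha.trans hab
    have hpow : a ^ (n + 1) ≤ b ^ (n + 1) := pow_le_pow_left₀ ha hab _
    have h1 := mul_le_mul_of_nonneg_left ih hb0
    have h2 := mul_le_mul_of_nonneg_right hpow (sub_nonneg.mpr hab)
    have key : b ^ (n + 1 + 1) - a ^ (n + 1 + 1)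
        = b * (b ^ (n + 1) - a ^ (n + 1)) + a ^ (n + 1) * (b - a) := by ring
    have key2 : ((n : ℝ) + 1 + 1) * b ^ (n + 1) * (b - a)
        = b * (((n : ℝ) + 1) * b ^ n * (b - a)) + b ^ (n + 1) * (b - a) := by ring
    push_cast
    linarith [h1, h2]

lemma aux_pow_lt {a b : ℝ} (ha : 0 ≤ a) (hab : a < b) :
    ∀ n : ℕ, 1 ≤ n → b ^ (n + 1) - a ^ (n + 1) < ((n : ℝ) + 1) * b ^ n * (b - a) := by
  intro n
  induction n with
  | zero => exact fun h => absurd h (by omega)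
  | succ n ih =>
    intro _
    have hb0 : 0 < b := ha.trans_lt hab
    have hpow : a ^ (n + 1) ≤ b ^ (n + 1) := pow_le_pow_left₀ ha hab.le _
    have h2 := mul_le_mul_of_nonneg_right hpow (sub_nonneg.mpr hab.le)
    have key : b ^ (n + 1 + 1) - a ^ (n + 1 + 1)
        = b * (b ^ (n + 1) - a ^ (n + 1)) + a ^ (n + 1) * (b - a) := by ring
    have key2 : ((n : ℝ) + 1 + 1) * b ^ (n + 1) * (b - a)
        = b * (((n : ℝ) + 1) * b ^ n * (b - a)) + b ^ (n + 1) * (b - a) := by ring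
    rcases Nat.eq_zero_or_pos n with hn | hn
    · subst hn
      push_cast
      nlinarith
    · have ihh := ih hn
      have h1 := mul_lt_mul_of_pos_left ihh hb0
      push_cast
      linarith [h1, h2]

lemma dle1 {d : ℕ → ℝ} (hdnn : ∀ k, 0 ≤ d k) (hdsum : Summable d)
    (hdle : ∑' k, d k ≤ 1) (k : ℕ) : d k ≤ 1 :=
  le_trans (Summable.le_tsum hdsum k (fun j _ => hdnn j)) hdle

lemma summable_genFun {d : ℕ → ℝ} (hdnn : ∀ k, 0 ≤ d k) (hdsum : Summable d)
    {x : ℝ} (hx0 : 0 ≤ x) (hx1 : x ≤ 1) : Summable (fun k => d k * x ^ k) := by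
  apply Summable.of_nonneg_of_le (fun k => mul_nonneg (hdnn k) (pow_nonneg hx0 k))
    (fun k => ?_) hdsum
  calc d k * x ^ k ≤ d k * 1 := by
        exact mul_le_mul_of_nonneg_left (pow_le_one₀ hx0 hx1) (hdnn k)
    _ = d k := mul_one _

lemma summable_genFunDeriv {d : ℕ → ℝ} (hdnn : ∀ k, 0 ≤ d k) (hdsum : Summable d)
    (hdle : ∑' k, d k ≤ 1) {x : ℝ} (hx0 : 0 ≤ x) (hx1 : x < 1) :
    Summable (fun k : ℕ => ((k : ℝ) + 1) * d (k + 1) * x ^ k) := by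
  have hgeo : Summable (fun k : ℕ => ((k : ℝ) + 1) * x ^ k) := by
    have h1 : Summable (fun k : ℕ => (k : ℝ) * x ^ k) := by
      simpa using summable_pow_mul_geometric_of_norm_lt_one 1 (by rw [Real.norm_eq_abs, abs_of_nonneg hx0]; exact hx1)
    have h2 : Summable (fun k : ℕ => x ^ k) := summable_geometric_of_lt_one hx0 hx1
    simpa [add_mul] using h1.add h2
  apply Summable.of_nonneg_of_le (fun k => ?_) (fun k => ?_) hgeo
  · have := hdnn (k + 1)
    positivity
  · have hk : (0:ℝ) ≤ (k : ℝ) + 1 := by positivity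
    have hd1 := dle1 hdnn hdsum hdle (k + 1)
    have hkd : ((k : ℝ) + 1) * d (k + 1) ≤ (k : ℝ) + 1 := by nlinarith
    calc ((k : ℝ) + 1) * d (k + 1) * x ^ k ≤ ((k : ℝ) + 1) * x ^ k :=
      mul_le_mul_of_nonneg_right hkd (pow_nonneg hx0 k)

lemma genFun_mono {d : ℕ → ℝ} (hdnn : ∀ k, 0 ≤ d k) (hdsum : Summable d)
    {a b : ℝ} (ha : 0 ≤ a) (hab : a ≤ b) (hb : b ≤ 1) : genFun d a ≤ genFun d b := by
  apply Summable.tsum_le_tsum (fun k => ?_) (summable_genFun hdnn hdsum ha (hab.trans hb))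
    (summable_genFun hdnn hdsum (ha.trans hab) hb)
  exact mul_le_mul_of_nonneg_left (pow_le_pow_left₀ ha hab k) (hdnn k)

lemma genFunDeriv_pos {d : ℕ → ℝ} (hdnn : ∀ k, 0 ≤ d k) (hdsum : Summable d)
    (hdle : ∑' k, d k ≤ 1) (hconv : ∃ k : ℕ, 2 ≤ k ∧ 0 < d k)
    {x : ℝ} (hx0 : 0 < x) (hx1 : x < 1) : 0 < genFunDeriv d x := by
  obtain ⟨k, hk2, hdk⟩ := hconv
  obtain ⟨i, rfl⟩ : ∃ i, k = i + 1 := ⟨k - 1, by omega⟩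
  have hterm : 0 < ((i : ℝ) + 1) * d (i + 1) * x ^ i := by positivity
  refine hterm.trans_le ?_
  exact Summable.le_tsum (summable_genFunDeriv hdnn hdsum hdle hx0.le hx1) i
    (fun j _ => by have := hdnn (j + 1); positivity)

lemma genFun_sub_eq {d : ℕ → ℝ} (hd0 : d 0 = 0) (hdnn : ∀ k, 0 ≤ d k) (hdsum : Summable d)
    {a b : ℝ} (ha : 0 ≤ a) (hab : a ≤ b) (hb : b ≤ 1) :
    genFun d b - genFun d a = ∑' k : ℕ, d (k + 1) * (b ^ (k + 1) - a ^ (k + 1)) := by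
  have hSb := summable_genFun hdnn hdsum (ha.trans hab) hb
  have hSa := summable_genFun hdnn hdsum ha (hab.trans hb)
  have hS := hSb.sub hSa
  rw [genFun, genFun, ← Summable.tsum_sub hSb hSa]
  rw [Summable.tsum_eq_zero_add hS]
  simp only [hd0, pow_zero, zero_mul, mul_one, sub_zero, zero_add, zero_sub, neg_zero]
  exact tsum_congr fun k => by ring

lemma slope_le {d : ℕ → ℝ} (hd0 : d 0 = 0) (hdnn : ∀ k, 0 ≤ d k) (hdsum : Summable d)
    (hdle : ∑' k, d k ≤ 1) {a b : ℝ} (ha : 0 ≤ a) (hab : a ≤ b) (hb : b < 1) :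
    genFun d b - genFun d a ≤ genFunDeriv d b * (b - a) := by
  have hb0 : 0 ≤ b := ha.trans hab
  rw [genFun_sub_eq hd0 hdnn hdsum ha hab hb.le, genFunDeriv, ← tsum_mul_right]
  have hSb := summable_genFun hdnn hdsum (ha.trans hab) hb.le
  have hSa := summable_genFun hdnn hdsum ha (hab.trans hb.le)
  have hSL : Summable (fun k : ℕ => d (k + 1) * (b ^ (k + 1) - a ^ (k + 1))) := by
    have := ((summable_nat_add_iff 1).mpr (hSb.sub hSa))
    exact this.congr fun k => by ring
  have hSR : Summable (fun k : ℕ => ((k : ℝ) + 1) * d (k + 1) * b ^ k * (b - a)) :=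
    (summable_genFunDeriv hdnn hdsum hdle hb0 hb).mul_right _
  apply Summable.tsum_le_tsum (fun k => ?_) hSL hSR
  calc d (k + 1) * (b ^ (k + 1) - a ^ (k + 1))
      ≤ d (k + 1) * (((k : ℝ) + 1) * b ^ k * (b - a)) :=
        mul_le_mul_of_nonneg_left (aux_pow_le ha hab k) (hdnn _)
    _ = ((k : ℝ) + 1) * d (k + 1) * b ^ k * (b - a) := by ring

lemma slope_lt {d : ℕ → ℝ} (hd0 : d 0 = 0) (hdnn : ∀ k, 0 ≤ d k) (hdsum : Summable d)
    (hdle : ∑' k, d k ≤ 1) (hconv : ∃ k : ℕ, 2 ≤ k ∧ 0 < d k)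
    {a b : ℝ} (ha : 0 ≤ a) (hab : a < b) (hb : b < 1) :
    genFun d b - genFun d a < genFunDeriv d b * (b - a) := by
  have hb0 : 0 ≤ b := ha.trans hab.le
  rw [genFun_sub_eq hd0 hdnn hdsum ha hab.le hb.le, genFunDeriv, ← tsum_mul_right]
  have hSb := summable_genFun hdnn hdsum hb0 hb.le
  have hSa := summable_genFun hdnn hdsum ha (hab.le.trans hb.le)
  have hSL : Summable (fun k : ℕ => d (k + 1) * (b ^ (k + 1) - a ^ (k + 1))) := by
    have := ((summable_nat_add_iff 1).mpr (hSb.sub hSa))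
    exact this.congr fun k => by ring
  have hSR : Summable (fun k : ℕ => ((k : ℝ) + 1) * d (k + 1) * b ^ k * (b - a)) :=
    (summable_genFunDeriv hdnn hdsum hdle hb0 hb).mul_right _
  obtain ⟨k0, hk2, hdk⟩ := hconv
  obtain ⟨i, rfl⟩ : ∃ i, k0 = i + 1 := ⟨k0 - 1, by omega⟩
  have hi1 : 1 ≤ i := by omega
  refine Summable.tsum_lt_tsum (i := i) (fun k => ?_) ?_ hSL hSR
  · calc d (k + 1) * (b ^ (k + 1) - a ^ (k + 1))
        ≤ d (k + 1) * (((k : ℝ) + 1) * b ^ k * (b - a)) :=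
          mul_le_mul_of_nonneg_left (aux_pow_le ha hab.le k) (hdnn _)
      _ = ((k : ℝ) + 1) * d (k + 1) * b ^ k * (b - a) := by ring
  · calc d (i + 1) * (b ^ (i + 1) - a ^ (i + 1))
        < d (i + 1) * (((i : ℝ) + 1) * b ^ i * (b - a)) :=
          mul_lt_mul_of_pos_left (aux_pow_lt ha hab i hi1) hdk
      _ = ((i : ℝ) + 1) * d (i + 1) * b ^ i * (b - a) := by ring

/-- let `(μ₊, μ₋)` be a two-cycle of `f(t) = 1 - H(t)` with
`H'(μ₊) H'(μ₋) ≤ 1` (stable case). Then any root `t ∈ [0, μ₊]` of the second-moment equation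
`H(1 - 2H(μ₊) + H(t)) = 1 - 2μ₊ + t` of the iterated RDE (with the argument of `H` lying in
`[0,1]`) equals `μ₊`; i.e. any other root must be strictly greater than `μ₊`. -/
theorem stable_two_cycle_unique_root (d : ℕ → ℝ) (hd0 : d 0 = 0) (hdnn : ∀ k, 0 ≤ d k)
    (hdsum : Summable d) (hdle : ∑' k, d k ≤ 1)
    (hconv : ∃ k : ℕ, 2 ≤ k ∧ 0 < d k)
    (μp μm : ℝ) (hμp : μp ∈ Set.Ioo (0 : ℝ) 1) (hμm : μm ∈ Set.Ioo (0 : ℝ) 1)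
    (hcycle1 : μm = 1 - genFun d μp) (hcycle2 : μp = 1 - genFun d μm)
    (hstable : genFunDeriv d μp * genFunDeriv d μm ≤ 1) :
    ∀ t ∈ Set.Icc (0 : ℝ) μp,
      1 - 2 * genFun d μp + genFun d t ∈ Set.Icc (0 : ℝ) 1 →
      genFun d (1 - 2 * genFun d μp + genFun d t) = 1 - 2 * μp + t →
      t = μp := by
  intro t ht hsmem hroot
  by_contra hne
  have htlt : t < μp := lt_of_le_of_ne ht.2 hne
  set s : ℝ := 1 - 2 * genFun d μp + genFun d t with hs_def
  have hHμm : genFun d μm = 1 - μp := by linarith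
  have hmono : genFun d t ≤ genFun d μp :=
    genFun_mono hdnn hdsum ht.1 ht.2 hμp.2.le
  have hsle : s ≤ μm := by
    have : μm = 1 - genFun d μp := hcycle1
    simp only [hs_def]; linarith
  have hs0 : (0:ℝ) ≤ s := hsmem.1
  -- convex slope inequality at (s, μm)
  have h1 : genFun d μm - genFun d s ≤ genFunDeriv d μm * (μm - s) :=
    slope_le hd0 hdnn hdsum hdle hs0 hsle hμm.2
  have harg : μm - s = genFun d μp - genFun d t := by
    simp only [hs_def]; linarith
  -- strict convex slope inequality at (t, μp)
  have h2 : genFun d μp - genFun d t < genFunDeriv d μp * (μp - t) :=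
    slope_lt hd0 hdnn hdsum hdle hconv ht.1 htlt hμp.2
  have hDm : 0 < genFunDeriv d μm :=
    genFunDeriv_pos hdnn hdsum hdle hconv hμm.1 hμm.2
  have h3 : genFunDeriv d μm * (genFun d μp - genFun d t)
      < genFunDeriv d μm * (genFunDeriv d μp * (μp - t)) :=
    mul_lt_mul_of_pos_left h2 hDm
  have h4 : genFun d μm - genFun d s = μp - t := by
    rw [hroot, hHμm]; ring
  have hpt : 0 < μp - t := sub_pos.mpr htlt
  nlinarith [h1, h3, h4, harg, hstable, hpt,
    mul_nonneg (sub_nonneg.mpr hstable) hpt.le]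
end
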